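/- There do not exist positive integers m and n such that both m^2 + n^2 and m^2 - n^2 (with m > n) are perfect squares. -/

import Mathlib

/-!
Fermat's descent. If `m² + n² = a²` and `m² - n² = b²` then `n⁴ + (ab)² = m⁴`, so it suffices
that `y⁴ + z² = x⁴` has no solution with `y z ≠ 0`; dividing by `gcd x y`, we may take it
primitive.
Then `(y², z, x²)` is a primitive Pythagorean triple. If `y` is odd, `y² = s² - t²` and
`x² = s² + t²`, so `t⁴ + (xy)² = s⁴` with `s < x`. If `y` is even, `y² = 2mn` and
`x² = m² + n²`; parametrizing the triangle `(m, n, x)` once more by `p, q`, the pairwise coprime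
numbers `p`, `q`, `p² - q²` have a square product, so they are `P²`, `Q²`, `R²` and
`Q⁴ + R² = P⁴` with `P < x`.
-/

theorem Nat.Coprime.exists_eq_pow_of_mul_eq_pow {a b c k : ℕ} (hab : a.Coprime b)
    (h : a * b = c ^ k) : ∃ d, a = d ^ k :=
  _root_.exists_eq_pow_of_mul_eq_pow (Nat.isUnit_iff.mpr hab) h

theorem Nat.coprime_classification_of_sq_add_sq_eq_sq {a b c : ℕ} (h : a ^ 2 + b ^ 2 = c ^ 2)
    (hab : a.Coprime b) (ha : Odd a) :
    ∃ p q : ℕ, p.Coprime q ∧ a + q ^ 2 = p ^ 2 ∧ b = 2 * p * q ∧ c = p ^ 2 + q ^ 2 := by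
  have ht : PythagoreanTriple a b c := by
    unfold PythagoreanTriple
    exact_mod_cast (by linear_combination h : a * a + b * b = c * c)
  have ha0 : 0 < a := ha.pos
  have hc : (0 : ℤ) < c := by exact_mod_cast Nat.pos_of_ne_zero (by rintro rfl; simp at h; omega)
  obtain ⟨m, n, ha', hb', hc', hmn, -, hm⟩ := ht.coprime_classification'
    (by rwa [Int.gcd_natCast_natCast]) (Int.odd_iff.mp (by exact_mod_cast ha)) hc
  have hm0 : 0 < m := hm.lt_of_ne <| by rintro rfl; nlinarith
  have hn : 0 ≤ n := by nlinarith
  lift m to ℕ using hm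
  lift n to ℕ using hn
  refine ⟨m, n, by rwa [Int.gcd_natCast_natCast] at hmn, ?_, ?_, ?_⟩ <;> zify <;> linarith

theorem Nat.Coprime.mul_coprime_of_add_sq_eq_sq {p q u : ℕ} (hpq : p.Coprime q)
    (h : u + q ^ 2 = p ^ 2) : (p * q).Coprime u := by
  have hsq : (p ^ 2).Coprime (q ^ 2) := hpq.pow 2 2
  refine Nat.Coprime.mul_left (Nat.eq_one_of_dvd_one ?_) (Nat.eq_one_of_dvd_one ?_)
  · have hp := dvd_pow (Nat.gcd_dvd_left p u) two_ne_zero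
    rw [← hsq]
    exact Nat.dvd_gcd hp ((Nat.dvd_add_right (Nat.gcd_dvd_right p u)).mp (h ▸ hp))
  · have hq := dvd_pow (Nat.gcd_dvd_left q u) two_ne_zero
    rw [← hsq]
    exact Nat.dvd_gcd (h ▸ dvd_add (Nat.gcd_dvd_right q u) hq) hq

namespace QuarticSubQuartic

def IsPrimitiveSol (x y z : ℕ) : Prop :=
  x.Coprime y ∧ 0 < y ∧ 0 < z ∧ y ^ 4 + z ^ 2 = x ^ 4

theorem exists_lt_of_sq_add_sq_of_two_mul_eq_sq {m n x y : ℕ} (h : m ^ 2 + n ^ 2 = x ^ 2)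
    (hmn : m.Coprime n) (hy : 0 < y) (hmny : 2 * m * n = y ^ 2) :
    ∃ P Q R, P < x ∧ IsPrimitiveSol P Q R := by
  wlog hm : Odd m generalizing m n
  · have h2m : 2 ∣ m := even_iff_two_dvd.mp (Nat.not_odd_iff_even.mp hm)
    exact this (by linarith) hmn.symm (by linarith)
      (Nat.Coprime.odd_of_left (hmn.coprime_dvd_left h2m))
  obtain ⟨p, q, hpq, hm', rfl, rfl⟩ := Nat.coprime_classification_of_sq_add_sq_eq_sq h hmn hm
  obtain ⟨w, rfl⟩ : 2 ∣ y :=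
    Nat.prime_two.dvd_of_dvd_pow (Dvd.intro (m * (2 * p * q)) (by rw [← hmny]; ring))
  have hw : p * q * m = w ^ 2 := by
    apply Nat.eq_of_mul_eq_mul_left four_pos
    linear_combination hmny
  have hcop := hpq.mul_coprime_of_add_sq_eq_sq hm'
  obtain ⟨d, hd⟩ := hcop.exists_eq_pow_of_mul_eq_pow hw
  obtain ⟨R, rfl⟩ := hcop.symm.exists_eq_pow_of_mul_eq_pow (by rw [mul_comm]; exact hw)
  obtain ⟨P, rfl⟩ := hpq.exists_eq_pow_of_mul_eq_pow hd
  obtain ⟨Q, rfl⟩ := hpq.symm.exists_eq_pow_of_mul_eq_pow (by rw [mul_comm]; exact hd)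
  have hQ : 0 < Q := Nat.pos_of_ne_zero <| by rintro rfl; simp at hw; nlinarith
  refine ⟨P, Q, R, ?_, ?_, hQ, Nat.pos_of_ne_zero (by rintro rfl; simp at hm), ?_⟩
  · calc P ≤ (P ^ 2) ^ 2 := by rw [← pow_mul]; exact Nat.le_self_pow (by norm_num) P
      _ < (P ^ 2) ^ 2 + (Q ^ 2) ^ 2 := Nat.lt_add_of_pos_right (by positivity)
  · exact (Nat.coprime_pow_left_iff two_pos _ _).mp
      ((Nat.coprime_pow_right_iff two_pos _ _).mp hpq)
  · linear_combination hm'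

theorem IsPrimitiveSol.exists_lt {x y z : ℕ} (h : IsPrimitiveSol x y z) :
    ∃ x' y' z', x' < x ∧ IsPrimitiveSol x' y' z' := by
  obtain ⟨hxy, hy, hz, h⟩ := h
  have hyz : (y ^ 2).Coprime z := by
    refine Nat.Coprime.pow_left 2 (Nat.eq_one_of_dvd_one ?_)
    rw [← (hxy.pow_left 4 : Nat.gcd (x ^ 4) y = 1)]
    refine Nat.dvd_gcd (h ▸ dvd_add ?_ ?_) (Nat.gcd_dvd_left y z)
    · exact dvd_pow (Nat.gcd_dvd_left y z) four_ne_zero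
    · exact dvd_pow (Nat.gcd_dvd_right y z) two_ne_zero
  rcases Nat.even_or_odd y with hy2 | hy2
  · have hz2 : Odd z := Nat.Coprime.odd_of_left <|
      hyz.coprime_dvd_left (dvd_pow (even_iff_two_dvd.mp hy2) two_ne_zero)
    obtain ⟨m, n, hmn, -, hmny, hx⟩ :=
      Nat.coprime_classification_of_sq_add_sq_eq_sq (c := x ^ 2)
        (by linear_combination h) hyz.symm hz2
    exact exists_lt_of_sq_add_sq_of_two_mul_eq_sq hx.symm hmn hy hmny.symm
  · obtain ⟨s, t, hst, hs, rfl, hx⟩ :=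
      Nat.coprime_classification_of_sq_add_sq_eq_sq (c := x ^ 2)
        (by linear_combination h) hyz hy2.pow
    have hx0 : 0 < x := Nat.pos_of_ne_zero <| by rintro rfl; simp at h; omega
    refine ⟨s, t, x * y, ?_, hst, Nat.pos_of_ne_zero ?_, by positivity, ?_⟩
    · exact lt_of_pow_lt_pow_left₀ 2 (Nat.zero_le x) (by nlinarith)
    · rintro rfl; simp at hz
    · rw [mul_pow, hx]; linear_combination (s ^ 2 + t ^ 2) * hs

theorem not_isPrimitiveSol (x y z : ℕ) : ¬ IsPrimitiveSol x y z := by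
  induction x using Nat.strong_induction_on generalizing y z with
  | _ x ih =>
    intro h
    obtain ⟨x', y', z', hlt, h'⟩ := h.exists_lt
    exact ih x' hlt y' z' h'

end QuarticSubQuartic

theorem Nat.pow_four_add_sq_ne_pow_four {x y z : ℕ} (hy : y ≠ 0) (hz : z ≠ 0) :
    y ^ 4 + z ^ 2 ≠ x ^ 4 := by
  intro h
  obtain ⟨g, x', y', hg, hxy, rfl, rfl⟩ :=
    Nat.exists_coprime' (Nat.gcd_pos_of_pos_right x (Nat.pos_of_ne_zero hy))
  obtain ⟨z', rfl⟩ : g ^ 2 ∣ z := by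
    rw [← Nat.pow_dvd_pow_iff two_ne_zero, ← pow_mul]
    refine (Nat.dvd_add_right (Dvd.intro_left _ (mul_pow y' g 4).symm)).mp ?_
    exact h ▸ Dvd.intro_left _ (mul_pow x' g 4).symm
  refine QuarticSubQuartic.not_isPrimitiveSol x' y' z' ⟨hxy,
    Nat.pos_of_ne_zero (by rintro rfl; simp at hy),
    Nat.pos_of_ne_zero (by rintro rfl; simp at hz), ?_⟩
  apply Nat.eq_of_mul_eq_mul_left (pow_pos hg 4)
  linear_combination h

theorem stmt_4 : ¬ ∃ m n : ℕ, 0 < n ∧ n < m ∧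
    (∃ a : ℕ, m^2 + n^2 = a^2) ∧ (∃ b : ℕ, m^2 - n^2 = b^2) := by
  rintro ⟨m, n, hn, hnm, ⟨a, ha⟩, ⟨b, hb⟩⟩
  have hb' : b ^ 2 + n ^ 2 = m ^ 2 := by
    have := Nat.pow_lt_pow_left hnm two_ne_zero
    omega
  have hb0 : b ≠ 0 := by rintro rfl; nlinarith
  have ha0 : a ≠ 0 := by rintro rfl; nlinarith
  refine Nat.pow_four_add_sq_ne_pow_four hn.ne' (mul_ne_zero ha0 hb0) (x := m) ?_
  rw [mul_pow, ← ha]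
  linear_combination (m ^ 2 + n ^ 2) * hb'
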